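/- Let a, b ∈ ℂ, let k ∈ ℤ, and let r > 0. Then (1/(2πi)) ∮_{|Y|=r} exp(aY + b/Y) · Y^{−k−1} dY = ∑_{m=0}^∞ a^{m+k₊} · b^{m+k₋} / ((m+k₊)! · (m+k₋)!), where k₊ := max(k,0) and k₋ := max(−k,0). In other words, the k-th Laurent coefficient at 0 of Y ↦ exp(aY + b/Y) equals the stated convergent sum. -/

import Mathlib

open Complex
open scoped Nat
open Metric Real

/-!
Multiplying the exponential series of `aY` and `b/Y` gives the absolutely convergent double
series `exp (aY + b/Y) = ∑ a^n b^m Y^(n-m) / (n! m!)`, dominated on the circle `|Y| = r` by the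
product of the exponential series of `‖a‖ r` and `‖b‖ / r`. Integrating it termwise against
`Y^(-k-1)`, only the monomials `Y^(-1)` survive, i.e. the terms with `n - m = k`; these are
exactly the pairs `(m + k₊, m + k₋)`.
-/

theorem circleIntegral.hasSum_integral_of_norm_le {ι E : Type*} [NormedAddCommGroup E]
    [NormedSpace ℂ E] [Countable ι] {f : ι → ℂ → E} {F : ℂ → E} {c : ℂ} {R : ℝ} (u : ι → ℝ)
    (hf : ∀ i, CircleIntegrable (f i) c R) (hfu : ∀ i, ∀ z ∈ sphere c |R|, ‖f i z‖ ≤ u i)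
    (hu : Summable u) (hfF : ∀ z ∈ sphere c |R|, HasSum (fun i ↦ f i z) (F z)) :
    HasSum (fun i ↦ ∮ z in C(c, R), f i z) (∮ z in C(c, R), F z) := by
  refine intervalIntegral.hasSum_integral_of_dominated_convergence (fun i _ ↦ |R| * u i)
    (fun i ↦ (hf i).out.aestronglyMeasurable_restrict_uIoc) (fun i ↦ ?_)
    (.of_forall fun _ _ ↦ hu.mul_left _) intervalIntegrable_const
    (.of_forall fun θ _ ↦ (hfF _ (circleMap_mem_sphere' c R θ)).const_smul _)
  refine .of_forall fun θ _ ↦ ?_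
  rw [norm_smul, deriv_circleMap, norm_mul, norm_circleMap_zero, norm_I, mul_one]
  exact mul_le_mul_of_nonneg_left (hfu i _ (circleMap_mem_sphere' c R θ)) (abs_nonneg R)

theorem circleIntegral.integral_zpow {R : ℝ} (hR : R ≠ 0) (n : ℤ) :
    (∮ z in C(0, R), z ^ n) = if n = -1 then 2 * π * I else 0 := by
  split_ifs with hn
  · simpa [hn] using circleIntegral.integral_sub_center_inv 0 hR
  · simpa using circleIntegral.integral_sub_zpow_of_ne hn 0 0 R

theorem Complex.hasSum_exp_add (x y : ℂ) :
    HasSum (fun p : ℕ × ℕ ↦ x ^ p.1 / p.1 ! * (y ^ p.2 / p.2 !)) (exp (x + y)) := by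
  have hx : HasSum (fun n : ℕ ↦ x ^ n / n !) (exp x) := by
    rw [exp_eq_exp_ℂ]; exact NormedSpace.expSeries_div_hasSum_exp x
  have hy : HasSum (fun n : ℕ ↦ y ^ n / n !) (exp y) := by
    rw [exp_eq_exp_ℂ]; exact NormedSpace.expSeries_div_hasSum_exp y
  have hxy := summable_mul_of_summable_norm (NormedSpace.norm_expSeries_div_summable x)
    (NormedSpace.norm_expSeries_div_summable y)
  have h := hx.mul hy hxy
  rwa [← exp_add] at h

theorem pow_div_factorial_mul_div_pow_div_factorial (a b : ℂ) {z : ℂ} (hz : z ≠ 0) (n m : ℕ) :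
    (a * z) ^ n / n ! * ((b / z) ^ m / m !) =
      a ^ n * b ^ m / (n ! * m !) * z ^ ((n : ℤ) - m) := by
  rw [zpow_sub₀ hz, zpow_natCast, zpow_natCast, mul_pow, div_pow]
  field_simp

theorem hasSum_ite_natCast_sub_eq_iff {M : Type*} [AddCommMonoid M] [TopologicalSpace M]
    (k : ℤ) (f : ℕ × ℕ → M) {s : M} :
    HasSum (fun p : ℕ × ℕ ↦ if (p.1 : ℤ) - p.2 = k then f p else 0) s ↔
      HasSum (fun m : ℕ ↦ f (m + k.toNat, m + (-k).toNat)) s := by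
  set g : ℕ → ℕ × ℕ := fun m ↦ (m + k.toNat, m + (-k).toNat)
  have hg : Function.Injective g := fun m m' h ↦ by simpa [g] using congrArg Prod.fst h
  have hsupp : ∀ p ∉ Set.range g, (if (p.1 : ℤ) - p.2 = k then f p else 0) = 0 := by
    rintro ⟨n, m⟩ hp
    refine if_neg fun hk ↦ hp ⟨n - k.toNat, ?_⟩
    simp only [g, Prod.mk.injEq]
    omega
  have hdiag : ∀ m, ((g m).1 : ℤ) - (g m).2 = k := fun m ↦ by simp only [g]; omega
  simp only [← hg.hasSum_iff hsupp, Function.comp_def, hdiag, if_true]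
  rfl

section ExpLaurent

variable (a b : ℂ) (k : ℤ) {r : ℝ} (hr : 0 < r)
include hr

theorem circleIntegral_exp_series_term (n m : ℕ) :
    (∮ Y in C(0, r), (a * Y) ^ n / n ! * ((b / Y) ^ m / m !) * Y ^ (-k - 1)) =
      2 * π * I * if (n : ℤ) - m = k then a ^ n * b ^ m / (n ! * m !) else 0 := by
  have hY : ∀ Y ∈ sphere (0 : ℂ) r, Y ≠ 0 := fun Y hY ↦ ne_zero_of_mem_sphere hr.ne' ⟨Y, hY⟩
  have hmonomial : Set.EqOn
      (fun Y ↦ (a * Y) ^ n / n ! * ((b / Y) ^ m / m !) * Y ^ (-k - 1))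
      (fun Y ↦ a ^ n * b ^ m / (n ! * m !) * Y ^ ((n : ℤ) - m + (-k - 1))) (sphere 0 r) :=
    fun Y hYr ↦ by
      dsimp only
      rw [pow_div_factorial_mul_div_pow_div_factorial a b (hY Y hYr), zpow_add₀ (hY Y hYr),
        mul_assoc]
  have hk : (n : ℤ) - m + (-k - 1) = -1 ↔ (n : ℤ) - m = k := by omega
  rw [circleIntegral.integral_congr hr.le hmonomial, circleIntegral.integral_const_mul,
    circleIntegral.integral_zpow hr.ne']
  simp only [hk]
  split_ifs <;> ring

theorem hasSum_circleIntegral_exp_series :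
    HasSum (fun p : ℕ × ℕ ↦
        ∮ Y in C(0, r), (a * Y) ^ p.1 / p.1 ! * ((b / Y) ^ p.2 / p.2 !) * Y ^ (-k - 1))
      (∮ Y in C(0, r), exp (a * Y + b / Y) * Y ^ (-k - 1)) := by
  have hY : ∀ Y ∈ sphere (0 : ℂ) r, Y ≠ 0 := fun Y hY ↦ ne_zero_of_mem_sphere hr.ne' ⟨Y, hY⟩
  refine circleIntegral.hasSum_integral_of_norm_le
    (fun p ↦ (‖a‖ * r) ^ p.1 / p.1 ! * ((‖b‖ / r) ^ p.2 / p.2 !) * r ^ (-k - 1))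
    (fun p ↦ ?_) (fun p Y hYr ↦ ?_) ?_ fun Y _ ↦ (hasSum_exp_add _ _).mul_right _
  · have hcont : ContinuousOn
        (fun Y ↦ (a * Y) ^ p.1 / p.1 ! * ((b / Y) ^ p.2 / p.2 !) * Y ^ (-k - 1)) (sphere 0 r) :=
      ((((continuousOn_const.mul continuousOn_id).pow _).div_const _).mul
        (((continuousOn_const.div continuousOn_id hY).pow _).div_const _)).mul
        (continuousOn_id.zpow₀ _ fun Y hYr ↦ Or.inl (hY Y hYr))
    exact hcont.circleIntegrable hr.le
  · rw [abs_of_pos hr, mem_sphere_zero_iff_norm] at hYr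
    simp [norm_pow, norm_zpow, hYr]
  · have h := (Real.summable_pow_div_factorial (‖a‖ * r)).mul_of_nonneg
      (Real.summable_pow_div_factorial (‖b‖ / r)) (fun _ ↦ by positivity) (fun _ ↦ by positivity)
    exact h.mul_right _

end ExpLaurent

/-- Let `a b : ℂ`, `k : ℤ`, `r > 0`. The `k`-th Laurent coefficient of `Y ↦ exp(aY + b/Y)`
at `0`, computed as `(1/(2πi)) ∮_{|Y|=r} exp(aY + b/Y) Y^(−k−1) dY`, equals
`∑_{m=0}^∞ a^(m+k₊) b^(m+k₋) / ((m+k₊)! (m+k₋)!)` where `k₊ = max(k,0)`, `k₋ = max(−k,0)`. -/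
theorem statement1 (a b : ℂ) (k : ℤ) (r : ℝ) (hr : 0 < r) :
    (1 / (2 * (Real.pi : ℂ) * Complex.I)) *
      (∮ Y in C(0, r), Complex.exp (a * Y + b / Y) * Y ^ (-k - 1)) =
    ∑' m : ℕ, a ^ (m + k.toNat) * b ^ (m + (-k).toNat) /
      ((Nat.factorial (m + k.toNat) : ℂ) * (Nat.factorial (m + (-k).toNat) : ℂ)) := by
  have h2πI : (2 * π * I : ℂ) ≠ 0 := by simp [pi_ne_zero, I_ne_zero]
  have hdiag := (hasSum_circleIntegral_exp_series a b k hr).mul_left (2 * π * I)⁻¹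
  simp only [circleIntegral_exp_series_term a b k hr, inv_mul_cancel_left₀ h2πI] at hdiag
  rw [one_div]
  exact ((hasSum_ite_natCast_sub_eq_iff k _).mp hdiag).tsum_eq.symm
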